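/- arXiv:2010.00280 — 2 statements merged into one kernel-verified Lean document; each statement's English description precedes it below -/
import Mathlib

section
/- Every finite dimensional Banach space has the local operator property L_{o,o}-nu: for every ε > 0 and every T ∈ L(X) with v(T) = 1, there is η > 0 such that whenever (x,x*) ∈ Π(X) satisfies |x*(Tx)| > 1 − η, there exists (y,y*) ∈ Π(X) with |y*(Ty)| = 1, ‖y − x‖ < ε, and ‖y* − x*‖ < ε. -/
/-!
The states of a finite dimensional space form a compact set `Π(X) ⊆ S_X × S_{X*}`, on which
`(x, f) ↦ ‖f (T x)‖` is continuous and bounded by `v(T) = 1`. Remove from `Π(X)` the open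
`ε`-neighbourhood of the states where this bound is attained: what is left is compact and the
function stays below `1` on it, hence below `1 - η` for some `η > 0`. So every state with
`‖f (T x)‖ > 1 - η` lies within `ε` of an attaining state.
-/

noncomputable section

open Filter Topology

variable (𝕜 : Type*) [RCLike 𝕜] (X : Type*) [NormedAddCommGroup X] [NormedSpace 𝕜 X]

/-- `(x, f)` is a state of `X`: `x ∈ S_X`, `f ∈ S_{X*}`, `f x = 1`. -/
def IsState (x : X) (f : X →L[𝕜] 𝕜) : Prop :=
  ‖x‖ = 1 ∧ ‖f‖ = 1 ∧ f x = 1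

/-- The numerical radius `v(T) = sup {|f (T x)| : (x, f) ∈ Π(X)}`. -/
def nrad (T : X →L[𝕜] X) : ℝ :=
  sSup {r : ℝ | ∃ x f, IsState 𝕜 X x f ∧ r = ‖f (T x)‖}

/-- The numerical index `n(X) = inf {v(T) : ‖T‖ = 1}`. -/
def nindex : ℝ :=
  sInf {r : ℝ | ∃ T : X →L[𝕜] X, ‖T‖ = 1 ∧ r = nrad 𝕜 X T}

theorem IsCompact.exists_pos_forall_le_sub_of_forall_lt {α : Type*} [TopologicalSpace α]
    {K : Set α} (hK : IsCompact K) {g : α → ℝ} (hg : ContinuousOn g K) {c : ℝ}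
    (hlt : ∀ p ∈ K, g p < c) : ∃ η, 0 < η ∧ ∀ p ∈ K, g p ≤ c - η := by
  rcases K.eq_empty_or_nonempty with rfl | hne
  · exact ⟨1, one_pos, by simp⟩
  obtain ⟨p₀, hp₀, hmax⟩ := hK.exists_isMaxOn hne hg
  exact ⟨c - g p₀, sub_pos.2 (hlt p₀ hp₀), fun p hp => by simpa using hmax hp⟩

theorem IsCompact.exists_pos_forall_exists_dist_lt_of_sub_lt {α : Type*} [PseudoMetricSpace α]
    {S : Set α} (hS : IsCompact S) {g : α → ℝ} (hg : ContinuousOn g S) {c : ℝ}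
    (hle : ∀ p ∈ S, g p ≤ c) {ε : ℝ} (hε : 0 < ε) :
    ∃ η, 0 < η ∧ ∀ p ∈ S, c - η < g p → ∃ q ∈ S, g q = c ∧ dist p q < ε := by
  set A := {q ∈ S | g q = c}
  have hK : IsCompact (S \ Metric.thickening ε A) := hS.diff Metric.isOpen_thickening
  have hlt : ∀ p ∈ S \ Metric.thickening ε A, g p < c := fun p ⟨hpS, hpA⟩ =>
    (hle p hpS).lt_of_ne fun h => hpA (Metric.self_subset_thickening hε A ⟨hpS, h⟩)
  obtain ⟨η, hη, hgap⟩ := hK.exists_pos_forall_le_sub_of_forall_lt (hg.mono Set.sdiff_subset) hlt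
  refine ⟨η, hη, fun p hpS hp => ?_⟩
  have hpA : p ∈ Metric.thickening ε A := by
    by_contra hpA
    exact (hgap p ⟨hpS, hpA⟩).not_gt hp
  obtain ⟨q, ⟨hqS, hq⟩, hpq⟩ := Metric.mem_thickening_iff.1 hpA
  exact ⟨q, hqS, hq, hpq⟩

def stateSet : Set (X × (X →L[𝕜] 𝕜)) :=
  {p | IsState 𝕜 X p.1 p.2}

theorem isClosed_stateSet : IsClosed (stateSet 𝕜 X) :=
  (isClosed_eq continuous_fst.norm continuous_const).inter <|
    (isClosed_eq continuous_snd.norm continuous_const).inter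
      (isClosed_eq (continuous_snd.clm_apply continuous_fst) continuous_const)

theorem isCompact_stateSet [FiniteDimensional 𝕜 X] : IsCompact (stateSet 𝕜 X) := by
  have : ProperSpace X := FiniteDimensional.proper 𝕜 X
  have : ProperSpace (X →L[𝕜] 𝕜) := FiniteDimensional.proper 𝕜 _
  refine ((isCompact_sphere 0 1).prod (isCompact_sphere 0 1)).of_isClosed_subset
    (isClosed_stateSet 𝕜 X) fun p hp => ?_
  exact ⟨mem_sphere_zero_iff_norm.2 hp.1, mem_sphere_zero_iff_norm.2 hp.2.1⟩

variable {𝕜 X}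

theorem IsState.norm_apply_le_nrad {x : X} {f : X →L[𝕜] 𝕜} (hxf : IsState 𝕜 X x f)
    (T : X →L[𝕜] X) : ‖f (T x)‖ ≤ nrad 𝕜 X T := by
  refine le_csSup ⟨‖T‖, ?_⟩ ⟨x, f, hxf, rfl⟩
  rintro r ⟨y, g, hyg, rfl⟩
  calc ‖g (T y)‖ ≤ ‖g‖ * (‖T‖ * ‖y‖) := g.le_opNorm_of_le (T.le_opNorm y)
    _ = ‖T‖ := by rw [hyg.1, hyg.2.1, one_mul, mul_one]

theorem stmt12_general [FiniteDimensional 𝕜 X] :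
    ∀ ε : ℝ, 0 < ε → ∀ T : X →L[𝕜] X, nrad 𝕜 X T = 1 →
      ∃ η : ℝ, 0 < η ∧ ∀ (x : X) (f : X →L[𝕜] 𝕜), IsState 𝕜 X x f →
        1 - η < ‖f (T x)‖ →
        ∃ (y : X) (g : X →L[𝕜] 𝕜), IsState 𝕜 X y g ∧ ‖g (T y)‖ = 1 ∧
          ‖y - x‖ < ε ∧ ‖g - f‖ < ε := by
  intro ε hε T hT
  have hcont : Continuous fun p : X × (X →L[𝕜] 𝕜) => ‖p.2 (T p.1)‖ :=
    (continuous_snd.clm_apply (T.continuous.comp continuous_fst)).norm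
  obtain ⟨η, hη, hnear⟩ := (isCompact_stateSet 𝕜 X).exists_pos_forall_exists_dist_lt_of_sub_lt
    hcont.continuousOn (fun p hp => hT ▸ IsState.norm_apply_le_nrad hp T) hε
  refine ⟨η, hη, fun x f hxf hTx => ?_⟩
  obtain ⟨⟨y, g⟩, hyg, hTy, hdist⟩ := hnear (x, f) hxf hTx
  rw [Prod.dist_eq, max_lt_iff, dist_comm x, dist_comm f, dist_eq_norm, dist_eq_norm] at hdist
  exact ⟨y, g, hyg, hTy, hdist⟩

/-- every finite dimensional Banach space has the local operator property
L_{o,o}-nu. -/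
theorem stmt12 [CompleteSpace X] [FiniteDimensional 𝕜 X] :
    ∀ ε : ℝ, 0 < ε → ∀ T : X →L[𝕜] X, nrad 𝕜 X T = 1 →
      ∃ η : ℝ, 0 < η ∧ ∀ (x : X) (f : X →L[𝕜] 𝕜), IsState 𝕜 X x f →
        1 - η < ‖f (T x)‖ →
        ∃ (y : X) (g : X →L[𝕜] 𝕜), IsState 𝕜 X y g ∧ ‖g (T y)‖ = 1 ∧
          ‖y - x‖ < ε ∧ ‖g - f‖ < ε :=
  stmt12_general
end
end

section
/- If X is a Banach space with numerical index n(X) = 1 that has the Bishop–Phelps–Bollobás point property for numerical radius (BPBpp-nu) with modulus η(ε), then X is uniformly smooth; specifically, whenever x₀ ∈ S_X and x₀* ∈ S_{X*} satisfy |x₀*(x₀)| > 1 − η(ε), there exists z* ∈ S_{X*} with |z*(x₀)| = 1 and ‖z* − x₀*‖ < ε. -/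
noncomputable section

open Filter Topology

variable (𝕜 : Type*) [RCLike 𝕜] (X : Type*) [NormedAddCommGroup X] [NormedSpace 𝕜 X]

variable {𝕜 X}

lemma exists_isState {x : X} (hx : ‖x‖ = 1) : ∃ f, IsState 𝕜 X x f := by
  obtain ⟨f, hf, hfx⟩ := exists_dual_vector 𝕜 x (by simp [hx])
  exact ⟨f, hx, hf, by simp [hfx, hx]⟩

lemma IsState.comp_smulRight {x : X} {f : X →L[𝕜] 𝕜} (h : IsState 𝕜 X x f)
    (g : X →L[𝕜] 𝕜) : f.comp (g.smulRight x) = g := by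
  ext y
  simp [h.2.2]

lemma nrad_nonneg (T : X →L[𝕜] X) : 0 ≤ nrad 𝕜 X T :=
  Real.sSup_nonneg (by rintro r ⟨x, f, -, rfl⟩; positivity)

lemma nrad_le_norm (T : X →L[𝕜] X) : nrad 𝕜 X T ≤ ‖T‖ := by
  refine Real.sSup_le ?_ (norm_nonneg T)
  rintro r ⟨x, f, ⟨hx, hf, -⟩, rfl⟩
  calc ‖f (T x)‖ ≤ ‖f‖ * (‖T‖ * ‖x‖) := f.le_of_opNorm_le_of_le le_rfl (T.le_opNorm x)
    _ = ‖T‖ := by rw [hx, hf, one_mul, mul_one]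

open scoped Pointwise in
lemma nrad_smul (c : 𝕜) (T : X →L[𝕜] X) : nrad 𝕜 X (c • T) = ‖c‖ * nrad 𝕜 X T := by
  have hset : {r : ℝ | ∃ x f, IsState 𝕜 X x f ∧ r = ‖f ((c • T) x)‖}
      = ‖c‖ • {r : ℝ | ∃ x f, IsState 𝕜 X x f ∧ r = ‖f (T x)‖} := by
    ext r
    constructor
    · rintro ⟨x, f, hs, rfl⟩
      exact ⟨‖f (T x)‖, ⟨x, f, hs, rfl⟩, by simp⟩
    · rintro ⟨-, ⟨x, f, hs, rfl⟩, rfl⟩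
      exact ⟨x, f, hs, by simp⟩
  rw [nrad, hset, Real.sSup_smul_of_nonneg (norm_nonneg c), smul_eq_mul, nrad]

lemma nrad_eq_norm_of_nindex_eq_one (hn : nindex 𝕜 X = 1) (T : X →L[𝕜] X) :
    nrad 𝕜 X T = ‖T‖ := by
  refine le_antisymm (nrad_le_norm T) ?_
  rcases eq_or_ne T 0 with rfl | hT
  · simpa using nrad_nonneg (0 : X →L[𝕜] X)
  have hTpos : 0 < ‖T‖ := norm_pos_iff.2 hT
  set c : 𝕜 := ((‖T‖⁻¹ : ℝ) : 𝕜)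
  have hc : ‖c‖ = ‖T‖⁻¹ := by simp [c]
  have hcT : ‖c • T‖ = 1 := by rw [norm_smul, hc, inv_mul_cancel₀ hTpos.ne']
  have hbdd : BddBelow {r : ℝ | ∃ T : X →L[𝕜] X, ‖T‖ = 1 ∧ r = nrad 𝕜 X T} :=
    ⟨0, by rintro r ⟨T, -, rfl⟩; exact nrad_nonneg T⟩
  have hle : 1 ≤ ‖T‖⁻¹ * nrad 𝕜 X T := by
    rw [← hc, ← nrad_smul, ← hn]
    exact csInf_le hbdd ⟨c • T, hcT, rfl⟩
  rwa [le_inv_mul_iff₀ hTpos, mul_one] at hle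

lemma ContinuousLinearMap.norm_eq_one_of_norm_apply_eq_one {F : Type*}
    [NormedAddCommGroup F] [NormedSpace 𝕜 F] {g : X →L[𝕜] F} {x : X}
    (hg : ‖g‖ ≤ 1) (hx : ‖x‖ = 1) (hgx : ‖g x‖ = 1) : ‖g‖ = 1 := by
  refine le_antisymm hg ?_
  calc 1 = ‖g x‖ := hgx.symm
    _ ≤ ‖g‖ * ‖x‖ := g.le_opNorm x
    _ = ‖g‖ := by rw [hx, mul_one]

variable (𝕜 X)

/- With `T = x₀* ⊗ x₀` and a state `(x₀, x₁*)`, the functional `z* = S* x₁*` works: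
`n(X) = 1` turns `v(S) = 1` into `‖S‖ = 1`, and `T* x₁* = x₀*`. -/
theorem stmt15 (hn : nindex 𝕜 X = 1) (η : ℝ → ℝ)
    (hη : ∀ ε : ℝ, 0 < ε → 0 < η ε ∧
      ∀ (T : X →L[𝕜] X) (x : X) (f : X →L[𝕜] 𝕜),
        nrad 𝕜 X T = 1 → IsState 𝕜 X x f → 1 - η ε < ‖f (T x)‖ →
        ∃ S : X →L[𝕜] X, nrad 𝕜 X S = 1 ∧ ‖f (S x)‖ = 1 ∧ ‖S - T‖ < ε) :
    ∀ ε : ℝ, 0 < ε → ∀ (x₀ : X) (f₀ : X →L[𝕜] 𝕜), ‖x₀‖ = 1 → ‖f₀‖ = 1 →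
      1 - η ε < ‖f₀ x₀‖ →
      ∃ z : X →L[𝕜] 𝕜, ‖z‖ = 1 ∧ ‖z x₀‖ = 1 ∧ ‖z - f₀‖ < ε := by
  intro ε hε x₀ f₀ hx₀ hf₀ hlarge
  obtain ⟨f, hf⟩ := exists_isState (𝕜 := 𝕜) hx₀
  set T := f₀.smulRight x₀
  have hfT : f.comp T = f₀ := hf.comp_smulRight f₀
  have hT : nrad 𝕜 X T = 1 := by
    rw [nrad_eq_norm_of_nindex_eq_one hn, ContinuousLinearMap.norm_smulRight_apply, hf₀, hx₀,
      one_mul]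
  obtain ⟨S, hS, hSx, hST⟩ :=
    (hη ε hε).2 T x₀ f hT hf (by rwa [← ContinuousLinearMap.comp_apply, hfT])
  refine ⟨f.comp S, ?_, hSx, ?_⟩
  · refine ContinuousLinearMap.norm_eq_one_of_norm_apply_eq_one ?_ hx₀ hSx
    calc ‖f.comp S‖ ≤ ‖f‖ * ‖S‖ := f.opNorm_comp_le S
      _ = 1 := by rw [hf.2.1, ← nrad_eq_norm_of_nindex_eq_one hn, hS, one_mul]
  · calc ‖f.comp S - f₀‖ = ‖f.comp (S - T)‖ := by rw [← hfT, ContinuousLinearMap.comp_sub]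
      _ ≤ ‖f‖ * ‖S - T‖ := f.opNorm_comp_le _
      _ = ‖S - T‖ := by rw [hf.2.1, one_mul]
      _ < ε := hST
end
end
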